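/- arXiv:2310.14650 — 4 statements merged into one kernel-verified Lean document; each statement's English description precedes it below -/
import Mathlib

section
/- Let d ≥ 2 and let n_1, ..., n_d be nonzero integers (indexed cyclically, n_{s+d} = n_s) such that n_1 + n_2 + ... + n_d = 0 and every proper consecutive partial sum is nonzero, i.e. n_j + n_{j+1} + ... + n_{j+r} ≠ 0 for all 1 ≤ j ≤ d and 0 ≤ r with the sum containing fewer than d terms. For each j define A_j = 1 / (n_j · (n_j + n_{j+1}) · (n_j + n_{j+1} + n_{j+2}) ⋯ (n_j + n_{j+1} + ⋯ + n_{j+d-2})), a product of the first d−1 consecutive partial sums starting at index j. Then the cyclic sum ∑_{j=1}^{d} A_j = 0. -/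
/-!
Write `B k = n 1 + ⋯ + n k` for the prefix sums. Because the full period sums to zero, `B` is
`d`-periodic, so every consecutive partial sum `n j + ⋯ + n (j + s)` is a difference
`B (m + 1 + s) - B m` with `j = m + 1`, and `A_j` becomes `∏_{k ≠ m} (B k - B m)⁻¹`, the indices
`k` running over a full period. The nonresonance hypothesis says exactly that
`B 0, …, B (d - 1)` are distinct, and for distinct nodes the sum of these products is the
coefficient of `X ^ (d - 1)` in the Lagrange interpolant of the constant polynomial `1`, which
vanishes since `d ≥ 2`.
-/

open Finset

theorem Lagrange.sum_inv_prod_sub_eq_zero {F ι : Type*} [Field F] [DecidableEq ι]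
    {s : Finset ι} {v : ι → F} (hvs : Set.InjOn v s) (hs : 2 ≤ #s) :
    ∑ i ∈ s, (∏ j ∈ s.erase i, (v j - v i))⁻¹ = 0 := by
  have h := Lagrange.coeff_eq_sum (neg_injective.comp_injOn hvs) (P := 1)
    (by rw [Polynomial.degree_one]; exact_mod_cast (by omega : 0 < #s))
  rw [Polynomial.coeff_one, if_neg (by omega)] at h
  simpa only [Function.comp_apply, Polynomial.eval_one, one_div, neg_sub_neg] using h.symm

theorem Finset.prod_range_pred_add_eq_prod_erase {M : Type*} [CommMonoid M] {d : ℕ}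
    {f : ℕ → M} (hf : Function.Periodic f d) {m : ℕ} (hm : m < d) :
    ∏ s ∈ range (d - 1), f (m + 1 + s) = ∏ k ∈ (range d).erase m, f k := by
  refine prod_nbij' (fun s => if m + 1 + s < d then m + 1 + s else m + 1 + s - d)
    (fun k => if m < k then k - m - 1 else k + d - m - 1) ?_ ?_ ?_ ?_ fun s _ => ?_
  any_goals intro k hk; simp only [mem_range, mem_erase] at *; split_ifs <;> omega
  split_ifs with h
  · rfl
  · calc f (m + 1 + s) = f (m + 1 + s - d + d) := by congr 1; omega
      _ = f (m + 1 + s - d) := hf _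

theorem Int.sum_Icc_one_eq_sum_range {M : Type*} [AddCommMonoid M] (d : ℕ) (f : ℤ → M) :
    ∑ j ∈ Icc (1 : ℤ) d, f j = ∑ m ∈ Finset.range d, f (1 + m) := by
  rw [Int.Icc_eq_finset_map, sum_map]
  simp

section PrefixSum

variable {G : Type*} [AddCommGroup G] {n : ℤ → G}

def prefixSum (n : ℤ → G) (k : ℕ) : G :=
  ∑ i ∈ range k, n (1 + i)

theorem sum_range_eq_prefixSum_sub (n : ℤ → G) (m k : ℕ) :
    ∑ i ∈ range k, n (1 + m + i) = prefixSum n (m + k) - prefixSum n m := by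
  rw [prefixSum, prefixSum, sum_range_add, add_sub_cancel_left]
  push_cast
  simp only [add_assoc]

theorem prefixSum_periodic {d : ℕ} (hper : ∀ s : ℤ, n (s + d) = n s)
    (hsum : prefixSum n d = 0) : Function.Periodic (prefixSum n) d := by
  intro k
  have h := sum_range_eq_prefixSum_sub n d k
  rw [hsum, sub_zero] at h
  rw [add_comm, ← h, prefixSum]
  refine sum_congr rfl fun i _ => ?_
  rw [add_right_comm, hper]

theorem prefixSum_injOn_range {d : ℕ}
    (hnr : ∀ m k : ℕ, 0 < k → m + k < d → ∑ i ∈ range k, n (1 + m + i) ≠ 0) :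
    Set.InjOn (prefixSum n) (range d) := by
  have hne : ∀ a b, a < b → b < d → prefixSum n a ≠ prefixSum n b := fun a b hab hb heq =>
    hnr a (b - a) (by omega) (by omega) <| by
      rw [sum_range_eq_prefixSum_sub, Nat.add_sub_cancel' hab.le, heq, sub_self]
  intro a ha b hb hab
  simp only [coe_range, Set.mem_Iio] at ha hb
  by_contra hab'
  rcases Nat.lt_or_gt_of_ne hab' with hlt | hlt
  · exact hne a b hlt hb hab
  · exact hne b a hlt ha hab.symm

end PrefixSum

theorem cyclic_sum_of_reciprocal_partial_products_eq_zero_general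
    (d : ℕ) (hd : 2 ≤ d) (n : ℤ → ℤ)
    (hper : ∀ s : ℤ, n (s + d) = n s)
    (hsum : ∑ j ∈ Finset.Icc (1 : ℤ) (d : ℤ), n j = 0)
    (hnr : ∀ (j : ℤ) (r : ℕ), 1 ≤ j → j ≤ d → r + 1 < d →
      (∑ i ∈ Finset.range (r + 1), n (j + i)) ≠ 0) :
    ∑ j ∈ Finset.Icc (1 : ℤ) (d : ℤ),
      (∏ s ∈ Finset.range (d - 1),
        ((∑ i ∈ Finset.range (s + 1), n (j + i) : ℤ) : ℚ))⁻¹ = 0 := by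
  rw [Int.sum_Icc_one_eq_sum_range] at hsum ⊢
  have hB : Function.Periodic (prefixSum n) d := prefixSum_periodic hper hsum
  have hinj : Set.InjOn (fun k => ((prefixSum n k : ℤ) : ℚ)) (range d) := by
    refine Int.cast_injective.comp_injOn (prefixSum_injOn_range fun m k hk hmk => ?_)
    simpa only [Nat.sub_add_cancel hk] using hnr (1 + m) (k - 1) (by omega) (by omega) (by omega)
  have hfactor : ∀ m ∈ range d, ∏ s ∈ range (d - 1), ((∑ i ∈ range (s + 1), n (1 + m + i) : ℤ) : ℚ)
      = ∏ k ∈ (range d).erase m, (((prefixSum n k : ℤ) : ℚ) - ((prefixSum n m : ℤ) : ℚ)) := by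
    intro m hm
    refine .trans ?_ (prod_range_pred_add_eq_prod_erase
      (hB.comp fun b : ℤ => (b : ℚ) - ((prefixSum n m : ℤ) : ℚ))
      (mem_range.mp hm))
    refine prod_congr rfl fun s _ => ?_
    rw [sum_range_eq_prefixSum_sub, add_right_comm m 1 s]
    push_cast
    rfl
  rw [sum_congr rfl fun m hm => by rw [hfactor m hm]]
  exact Lagrange.sum_inv_prod_sub_eq_zero hinj (by simpa)

/-- **Lemma 6.1.** Cyclic sum of the reciprocal partial-sum products vanishes. -/
theorem cyclic_sum_of_reciprocal_partial_products_eq_zero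
    (d : ℕ) (hd : 2 ≤ d) (n : ℤ → ℤ)
    (hper : ∀ s : ℤ, n (s + d) = n s)
    (hzero : ∀ j : ℤ, 1 ≤ j → j ≤ d → n j ≠ 0)
    (hsum : ∑ j ∈ Finset.Icc (1 : ℤ) (d : ℤ), n j = 0)
    (hnr : ∀ (j : ℤ) (r : ℕ), 1 ≤ j → j ≤ d → r + 1 < d →
      (∑ i ∈ Finset.range (r + 1), n (j + i)) ≠ 0) :
    ∑ j ∈ Finset.Icc (1 : ℤ) (d : ℤ),
      (∏ s ∈ Finset.range (d - 1),
        ((∑ i ∈ Finset.range (s + 1), n (j + i) : ℤ) : ℚ))⁻¹ = 0 :=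
  cyclic_sum_of_reciprocal_partial_products_eq_zero_general d hd n hper hsum hnr
end

section
/- Let L be an n × n complex matrix and α : ℝ → M_n(ℂ) a k-times continuously differentiable matrix-valued function. Then ∂_τ^k ( exp((t−τ)L) · α(τ) · exp(τL) ) = ∑_{ℓ=0}^{k} (−1)^ℓ (k choose ℓ) exp((t−τ)L) · ad_L^ℓ(α^{(k−ℓ)}(τ)) · exp(τL), where α^{(m)} denotes the m-th derivative of α and ad_L^ℓ is the ℓ-fold iterated commutator with L. -/
/-!
Differentiating `s ↦ e^{(t-s)L} B(s) e^{sL}` gives `e^{(t-s)L} (B' - ad_L B) e^{sL}`, since `L`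
commutes with its exponentials. Hence the family
`f i j s = (-1)^i e^{(t-s)L} ad_L^i(α^{(j)}(s)) e^{sL}` satisfies
`(f i j)' = f i (j+1) + f (i+1) j`, and for any such family Pascal's rule gives, by induction on `k`,
`(f 0 0)^{(k)} = ∑_{i+j=k} (k choose i) f i j`.
-/

open Matrix NormedSpace Finset

attribute [local instance] Matrix.linftyOpNormedAddCommGroup Matrix.linftyOpNormedSpace
  Matrix.linftyOpNormedRing Matrix.linftyOpNormedAlgebra

theorem iteratedDeriv_eq_sum_antidiagonal_choose {𝕜 E : Type*} [NontriviallyNormedField 𝕜]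
    [NormedAddCommGroup E] [NormedSpace 𝕜 E] (f : ℕ → ℕ → 𝕜 → E) (k : ℕ)
    (hf : ∀ i j, i + j < k → ∀ s, HasDerivAt (f i j) (f i (j + 1) s + f (i + 1) j s) s) :
    iteratedDeriv k (f 0 0) = fun s => ∑ ij ∈ antidiagonal k, k.choose ij.1 • f ij.1 ij.2 s := by
  induction k with
  | zero => simp
  | succ k ih =>
    ext s
    have hsum : HasDerivAt (fun s => ∑ ij ∈ antidiagonal k, k.choose ij.1 • f ij.1 ij.2 s)
        (∑ ij ∈ antidiagonal k,
          k.choose ij.1 • (f ij.1 (ij.2 + 1) s + f (ij.1 + 1) ij.2 s)) s :=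
      HasDerivAt.fun_sum fun ij hij =>
        (hf ij.1 ij.2 (by rw [mem_antidiagonal.1 hij]; omega) s).fun_const_smul _
    rw [iteratedDeriv_succ, ih fun i j hij => hf i j (by omega), hsum.deriv,
      sum_antidiagonal_choose_succ_nsmul (fun i j => f i j s)]
    simp only [smul_add, sum_add_distrib, add_right_inj]
    refine sum_congr rfl fun ij hij => ?_
    rw [k.choose_symm_of_eq_add (mem_antidiagonal.1 hij).symm]

theorem HasDerivAt.iterate_commutator {A : Type*} [NormedRing A] [NormedAlgebra ℝ A] (L : A)
    (i : ℕ) {B : ℝ → A} {B' : A} {τ : ℝ} (hB : HasDerivAt B B' τ) :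
    HasDerivAt (fun s => (fun X => L * X - X * L)^[i] (B s))
      ((fun X => L * X - X * L)^[i] B') τ := by
  induction i with
  | zero => exact hB
  | succ i ih =>
    simp only [Function.iterate_succ_apply']
    exact (ih.const_mul L).sub (ih.mul_const L)

section

variable {A : Type*} [NormedRing A] [NormedAlgebra ℂ A] [CompleteSpace A]

theorem hasDerivAt_exp_ofReal_smul_const (L : A) (τ : ℝ) :
    HasDerivAt (fun s : ℝ => exp ((s : ℂ) • L)) (exp ((τ : ℂ) • L) * L) τ := by
  simpa only [Complex.coe_smul] using hasDerivAt_exp_smul_const L τ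

theorem hasDerivAt_exp_sub_ofReal_smul_const (L : A) (t τ : ℝ) :
    HasDerivAt (fun s : ℝ => exp (((t : ℂ) - s) • L)) (-(L * exp (((t : ℂ) - τ) • L))) τ := by
  have := (hasDerivAt_exp_smul_const' L (t - τ)).scomp τ ((hasDerivAt_id τ).const_sub t)
  simp only [← Complex.ofReal_sub, Complex.coe_smul]
  simpa [Function.comp_def] using this

theorem hasDerivAt_exp_smul_conj (L : A) (t : ℝ) {B : ℝ → A} {B' : A} {τ : ℝ}
    (hB : HasDerivAt B B' τ) :
    HasDerivAt (fun s : ℝ => exp (((t : ℂ) - s) • L) * B s * exp ((s : ℂ) • L))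
      (exp (((t : ℂ) - τ) • L) * (B' - (L * B τ - B τ * L)) * exp ((τ : ℂ) • L)) τ := by
  have hL_left : Commute L (exp (((t : ℂ) - τ) • L)) := ((Commute.refl L).smul_right _).exp_right
  have hL_right : Commute L (exp ((τ : ℂ) • L)) := ((Commute.refl L).smul_right _).exp_right
  refine (((hasDerivAt_exp_sub_ofReal_smul_const L t τ).mul hB).mul
    (hasDerivAt_exp_ofReal_smul_const L τ)).congr_deriv ?_
  rw [Pi.mul_apply, neg_mul, hL_left.eq, ← hL_right.eq]
  noncomm_ring

end

/-- Lemma A.1 (matrix version): Leibniz-type formula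
`∂_τ^k(e^{(t-τ)L} α(τ) e^{τL}) = ∑_{ℓ=0}^{k} (-1)^ℓ (k choose ℓ) e^{(t-τ)L} ad_L^ℓ(α^{(k-ℓ)}(τ)) e^{τL}`. -/
theorem iteratedDeriv_conjugated_exp_time_dependent
    (n : ℕ) (L : Matrix (Fin n) (Fin n) ℂ) (α : ℝ → Matrix (Fin n) (Fin n) ℂ)
    (k : ℕ) (hα : ContDiff ℝ (k : ℕ∞) α) (t τ : ℝ) :
    iteratedDeriv k
      (fun s : ℝ => exp (((t : ℂ) - (s : ℂ)) • L) * α s * exp ((s : ℂ) • L)) τ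
    = ∑ ℓ ∈ Finset.range (k + 1),
        (((-1 : ℂ) ^ ℓ) * (Nat.choose k ℓ : ℂ)) •
          (exp (((t : ℂ) - (τ : ℂ)) • L) *
            ((fun X => L * X - X * L)^[ℓ] (iteratedDeriv (k - ℓ) α τ)) *
            exp ((τ : ℂ) • L)) := by
  set f : ℕ → ℕ → ℝ → Matrix (Fin n) (Fin n) ℂ := fun i j s => (-1 : ℂ) ^ i •
    (exp (((t : ℂ) - s) • L) * (fun X => L * X - X * L)^[i] (iteratedDeriv j α s) *
      exp ((s : ℂ) • L))
  have hf : ∀ i j, i + j < k → ∀ s, HasDerivAt (f i j) (f i (j + 1) s + f (i + 1) j s) s := by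
    intro i j hij s
    have hα' : HasDerivAt (iteratedDeriv j α) (iteratedDeriv (j + 1) α s) s := by
      rw [iteratedDeriv_succ]
      exact (hα.differentiable_iteratedDeriv j (by exact_mod_cast (by omega : j < k)) s).hasDerivAt
    refine (hasDerivAt_exp_smul_conj L t (hα'.iterate_commutator L i)).const_smul ((-1 : ℂ) ^ i)
      |>.congr_deriv ?_
    simp only [f]
    rw [Function.iterate_succ_apply', pow_succ, mul_neg_one, neg_smul, ← sub_eq_add_neg,
      ← smul_sub, ← sub_mul, ← mul_sub]
    rfl
  have hF : (fun s : ℝ => exp (((t : ℂ) - (s : ℂ)) • L) * α s * exp ((s : ℂ) • L)) = f 0 0 := by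
    simp [f]
  rw [hF, iteratedDeriv_eq_sum_antidiagonal_choose f k hf]
  dsimp only
  rw [Nat.sum_antidiagonal_eq_sum_range_succ (fun i j => k.choose i • f i j τ)]
  refine sum_congr rfl fun ℓ _ => ?_
  rw [← Nat.cast_smul_eq_nsmul ℂ, smul_smul, mul_comm]
end

section
/- Let L and α be n × n complex matrices, ω > 0, m a nonzero integer, t > 0, u_0 ∈ ℂ^n, and r ≥ 1. Then ∫_0^t e^{iωτm} exp((t−τ)L) α exp(τL) u_0 dτ = ∑_{k=0}^{r−1} (iωm)^{−(k+1)} [ e^{iωtm} ad_L^k(α) exp(tL) − exp(tL) ad_L^k(α) ] u_0 + (iωm)^{−r} ∫_0^t e^{iωτm} exp((t−τ)L) ad_L^r(α) exp(τL) u_0 dτ. -/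
open Matrix NormedSpace

attribute [local instance] Matrix.linftyOpNormedAddCommGroup Matrix.linftyOpNormedSpace
  Matrix.linftyOpNormedRing Matrix.linftyOpNormedAlgebra

/-!
Since `d/dτ (exp ((t - τ) L) β exp (τ L)) = - exp ((t - τ) L) [L, β] exp (τ L)`, one integration
by parts against `exp (c τ) = c⁻¹ d/dτ exp (c τ)`, `c = i ω m`, produces the boundary terms and
`c⁻¹` times the same integral with `β` replaced by `[L, β]`; `r` such steps give the identity.
-/

open Complex Interval

theorem intervalIntegral.integral_cexp_mul_smul_eq {E : Type*} [NormedAddCommGroup E]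
    [NormedSpace ℂ E] [CompleteSpace E] {c : ℂ} (hc : c ≠ 0) {f f' : ℝ → E} {a b : ℝ}
    (hf : ∀ x ∈ [[a, b]], HasDerivAt f (f' x) x)
    (hf' : IntervalIntegrable f' MeasureTheory.volume a b) :
    ∫ x in a..b, cexp (c * x) • f x =
      c⁻¹ • (cexp (c * b) • f b - cexp (c * a) • f a) - c⁻¹ • ∫ x in a..b, cexp (c * x) • f' x := by
  have hexp (x : ℝ) : HasDerivAt (fun x : ℝ => cexp (c * x)) (c * cexp (c * x)) x := by
    simpa [mul_comm] using (((hasDerivAt_id (x : ℂ)).const_mul c).cexp).comp_ofReal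
  have hparts := intervalIntegral.integral_smul_deriv_eq_deriv_smul (fun x _ => hexp x) hf
    ((by fun_prop : Continuous fun x : ℝ => c * cexp (c * x)).intervalIntegrable a b) hf'
  simp only [mul_smul, intervalIntegral.integral_smul] at hparts
  rw [hparts, smul_sub c⁻¹ (_ - _), inv_smul_smul₀ hc, sub_sub_cancel]

theorem hasDerivAt_exp_sub_smul_mul_mul_exp_smul {𝕂 𝔸 : Type*} [RCLike 𝕂] [NormedRing 𝔸]
    [NormedAlgebra 𝕂 𝔸] [CompleteSpace 𝔸] (L β : 𝔸) (t z : 𝕂) :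
    HasDerivAt (fun z : 𝕂 => exp ((t - z) • L) * β * exp (z • L))
      (-(exp ((t - z) • L) * (L * β - β * L) * exp (z • L))) z := by
  have hleft : HasDerivAt (fun z : 𝕂 => exp ((t - z) • L)) (-(exp ((t - z) • L) * L)) z := by
    simpa [Function.comp_def] using
      (hasDerivAt_exp_smul_const L (t - z)).scomp z ((hasDerivAt_id z).const_sub t)
  refine ((hleft.mul_const β).mul (hasDerivAt_exp_smul_const' L z)).congr_deriv ?_
  noncomm_ring

theorem integral_cexp_mul_smul_exp_sub_smul_mul_mul_exp_smul_mulVec {ι : Type*} [Fintype ι]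
    [DecidableEq ι] {c : ℂ} (hc : c ≠ 0) (L β : Matrix ι ι ℂ) (t : ℝ) (u : ι → ℂ) :
    ∫ τ in (0:ℝ)..t, cexp (c * τ) • ((exp (((t : ℂ) - τ) • L) * β * exp ((τ : ℂ) • L)) *ᵥ u)
      = c⁻¹ • (cexp (c * t) • ((β * exp ((t : ℂ) • L)) *ᵥ u) - (exp ((t : ℂ) • L) * β) *ᵥ u)
        + c⁻¹ • ∫ τ in (0:ℝ)..t, cexp (c * τ) •
            ((exp (((t : ℂ) - τ) • L) * (L * β - β * L) * exp ((τ : ℂ) • L)) *ᵥ u) := by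
  let mulVecCLM : Matrix ι ι ℂ →L[ℂ] (ι → ℂ) :=
    LinearMap.toContinuousLinearMap ((mulVecBilin ℂ ℂ).flip u)
  have hderiv (γ : Matrix ι ι ℂ) (τ : ℝ) :
      HasDerivAt (fun τ : ℝ => (exp (((t : ℂ) - τ) • L) * γ * exp ((τ : ℂ) • L)) *ᵥ u)
        (-((exp (((t : ℂ) - τ) • L) * (L * γ - γ * L) * exp ((τ : ℂ) • L)) *ᵥ u)) τ := by
    refine ((mulVecCLM.hasFDerivAt.comp_hasDerivAt _ (hasDerivAt_exp_sub_smul_mul_mul_exp_smul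
      L γ (t : ℂ) τ)).scomp τ ofRealCLM.hasDerivAt).congr_deriv ?_
    rw [ofRealCLM_apply, ofReal_one, one_smul]
    exact neg_mulVec u _
  have hcont : Continuous fun τ : ℝ =>
      -((exp (((t : ℂ) - τ) • L) * (L * β - β * L) * exp ((τ : ℂ) • L)) *ᵥ u) :=
    (continuous_iff_continuousAt.2 fun τ => (hderiv _ τ).continuousAt).neg
  rw [intervalIntegral.integral_cexp_mul_smul_eq hc (fun τ _ => hderiv β τ)
    (hcont.intervalIntegrable _ _)]
  simp [smul_neg, intervalIntegral.integral_neg, sub_eq_add_neg]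

theorem oscillatory_integral_integration_by_parts_general
    (n : ℕ) (L α : Matrix (Fin n) (Fin n) ℂ) (ω : ℝ) (hω : 0 < ω)
    (m : ℤ) (hm : m ≠ 0) (t : ℝ) (u₀ : Fin n → ℂ) (r : ℕ) :
    (∫ τ in (0:ℝ)..t, Complex.exp (Complex.I * ω * τ * m) •
        ((exp (((t : ℂ) - (τ : ℂ)) • L) * α * exp ((τ : ℂ) • L)).mulVec u₀))
    = (∑ k ∈ Finset.range r,
        ((Complex.I * ω * m) ^ (k + 1))⁻¹ •
          ((Complex.exp (Complex.I * ω * t * m) •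
              (((fun X => L * X - X * L)^[k] α) * exp ((t : ℂ) • L)).mulVec u₀)
            - (exp ((t : ℂ) • L) * ((fun X => L * X - X * L)^[k] α)).mulVec u₀))
      + ((Complex.I * ω * m) ^ r)⁻¹ •
          ∫ τ in (0:ℝ)..t, Complex.exp (Complex.I * ω * τ * m) •
            ((exp (((t : ℂ) - (τ : ℂ)) • L) * ((fun X => L * X - X * L)^[r] α) *
              exp ((τ : ℂ) • L)).mulVec u₀) := by
  set c : ℂ := I * ω * m
  have hc : c ≠ 0 := by simp [c, hω.ne', hm]
  have hphase (x : ℝ) : cexp (I * ω * x * m) = cexp (c * x) := by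
    congr 1; ring
  simp only [hphase]
  induction r with
  | zero => simp
  | succ r ih =>
    rw [ih, integral_cexp_mul_smul_exp_sub_smul_mul_mul_exp_smul_mulVec hc,
      Finset.sum_range_succ, Function.iterate_succ_apply', smul_add, smul_smul, smul_smul,
      ← mul_inv, ← pow_succ, add_assoc]

/-- Identity (5.1) in the matrix setting: repeated integration by parts for the
oscillatory Duhamel integral. -/
theorem oscillatory_integral_integration_by_parts
    (n : ℕ) (L α : Matrix (Fin n) (Fin n) ℂ) (ω : ℝ) (hω : 0 < ω)
    (m : ℤ) (hm : m ≠ 0) (t : ℝ) (ht : 0 < t) (u₀ : Fin n → ℂ) (r : ℕ) (hr : 1 ≤ r) :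
    (∫ τ in (0:ℝ)..t, Complex.exp (Complex.I * ω * τ * m) •
        ((exp (((t : ℂ) - (τ : ℂ)) • L) * α * exp ((τ : ℂ) • L)).mulVec u₀))
    = (∑ k ∈ Finset.range r,
        ((Complex.I * ω * m) ^ (k + 1))⁻¹ •
          ((Complex.exp (Complex.I * ω * t * m) •
              (((fun X => L * X - X * L)^[k] α) * exp ((t : ℂ) • L)).mulVec u₀)
            - (exp ((t : ℂ) • L) * ((fun X => L * X - X * L)^[k] α)).mulVec u₀))
      + ((Complex.I * ω * m) ^ r)⁻¹ •
          ∫ τ in (0:ℝ)..t, Complex.exp (Complex.I * ω * τ * m) •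
            ((exp (((t : ℂ) - (τ : ℂ)) • L) * ((fun X => L * X - X * L)^[r] α) *
              exp ((τ : ℂ) • L)).mulVec u₀) :=
  oscillatory_integral_integration_by_parts_general n L α ω hω m hm t u₀ r
end

section
/- Let L, α be n × n complex matrices that commute with each other's iterated commutators as needed, ω > 0, m a nonzero integer, and u_0 ∈ ℂ^n. Define I(ω) = ∫_0^t e^{iωmτ} exp((t−τ)L) α exp(τL) u_0 dτ. Then ‖I(ω)‖ ≤ (1/(ω|m|)) ( ‖ad_L^0(α) exp(tL) u_0‖ + ‖exp(tL) α u_0‖ + t · max_{τ∈[0,t]} ‖exp((t−τ)L) ad_L^1(α) exp(τL) u_0‖ ), so I(ω) = O(ω^{−1}) as ω → ∞ with constant independent of ω. -/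
/-!
Since `exp (I ν τ)` is the derivative of `exp (I ν τ) / (I ν)`, one integration by parts trades
the oscillating factor for a factor `1 / |ν|`, at the cost of two boundary terms and the integral
of the derivative of the Duhamel integrand `exp ((t - τ) L) α exp (τ L)`, which is
`-exp ((t - τ) L) [L, α] exp (τ L)`.
-/

open Matrix NormedSpace

attribute [local instance] Matrix.linftyOpNormedAddCommGroup Matrix.linftyOpNormedSpace
  Matrix.linftyOpNormedRing Matrix.linftyOpNormedAlgebra

open Set MeasureTheory intervalIntegral

theorem IsCompact.le_biSup_of_continuousOn {X α : Type*} [TopologicalSpace X]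
    [ConditionallyCompleteLinearOrder α] [TopologicalSpace α] [ClosedIciTopology α]
    {s : Set X} (hs : IsCompact s) {f : X → α} (hf : ContinuousOn f s) {x : X} (hx : x ∈ s) :
    f x ≤ ⨆ y ∈ s, f y := by
  have : Nonempty α := ⟨f x⟩
  refine le_ciSup₂ (f := fun y (_ : y ∈ s) => f y) ((hs.bddAbove_image hf).mono ?_) x hx
  rintro _ ⟨_, ⟨y, rfl⟩, ⟨hy, rfl⟩⟩
  exact mem_image_of_mem f hy

section Oscillatory

open Complex

variable {E : Type*} [NormedAddCommGroup E] [NormedSpace ℂ E] [CompleteSpace E]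

theorem hasDerivAt_cexp_mul_I_div {ν : ℝ} (hν : ν ≠ 0) (τ : ℝ) :
    HasDerivAt (fun τ : ℝ => cexp (I * ν * τ) / (I * ν)) (cexp (I * ν * τ)) τ := by
  have h := (((hasDerivAt_id τ).ofReal_comp.const_mul (I * ν)).cexp).div_const (I * ν)
  rw [ofReal_one, mul_one, mul_div_cancel_right₀ _ (mul_ne_zero I_ne_zero (ofReal_ne_zero.2 hν))]
    at h
  exact h

theorem norm_integral_cexp_I_mul_smul_le {ν t C : ℝ} (hν : ν ≠ 0) (ht : 0 ≤ t) {F F' : ℝ → E}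
    (hF : ∀ τ ∈ Icc 0 t, HasDerivAt F (F' τ) τ) (hF' : IntervalIntegrable F' volume 0 t)
    (hC : ∀ τ ∈ Icc 0 t, ‖F' τ‖ ≤ C) :
    ‖∫ τ in 0..t, cexp (I * ν * τ) • F τ‖ ≤ 1 / |ν| * (‖F t‖ + ‖F 0‖ + t * C) := by
  set u : ℝ → ℂ := fun τ => cexp (I * ν * τ) / (I * ν)
  have hu_norm : ∀ τ, ‖u τ‖ = 1 / |ν| := fun τ => by
    rw [norm_div, mul_assoc, ← ofReal_mul, norm_exp_I_mul_ofReal]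
    simp
  have hparts := integral_smul_deriv_eq_deriv_smul (u := u)
    (fun τ _ => hasDerivAt_cexp_mul_I_div hν τ) (fun τ hτ => hF τ (by rwa [uIcc_of_le ht] at hτ))
    ((by fun_prop : Continuous fun τ : ℝ => cexp (I * ν * τ)).intervalIntegrable _ _) hF'
  have hbound : ∀ τ ∈ uIoc 0 t, ‖u τ • F' τ‖ ≤ 1 / |ν| * C := fun τ hτ => by
    rw [norm_smul, hu_norm]
    exact mul_le_mul_of_nonneg_left (hC τ (Ioc_subset_Icc_self (by rwa [uIoc_of_le ht] at hτ)))
      (by positivity)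
  calc ‖∫ τ in 0..t, cexp (I * ν * τ) • F τ‖
      = ‖u t • F t - u 0 • F 0 - ∫ τ in 0..t, u τ • F' τ‖ := by rw [hparts, sub_sub_cancel]
    _ ≤ ‖u t • F t‖ + ‖u 0 • F 0‖ + ‖∫ τ in 0..t, u τ • F' τ‖ :=
        (norm_sub_le _ _).trans (add_le_add (norm_sub_le _ _) le_rfl)
    _ ≤ 1 / |ν| * ‖F t‖ + 1 / |ν| * ‖F 0‖ + 1 / |ν| * C * |t - 0| := by
        rw [norm_smul, norm_smul, hu_norm, hu_norm]
        exact add_le_add le_rfl (norm_integral_le_of_norm_le_const hbound)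
    _ = 1 / |ν| * (‖F t‖ + ‖F 0‖ + t * C) := by rw [sub_zero, abs_of_nonneg ht]; ring

variable {𝔸 : Type*} [NormedRing 𝔸] [NormedAlgebra ℂ 𝔸] [CompleteSpace 𝔸]

theorem hasDerivAt_exp_ofReal_smul (L : 𝔸) (τ : ℝ) :
    HasDerivAt (fun τ : ℝ => exp ((τ : ℂ) • L)) (L * exp ((τ : ℂ) • L)) τ := by
  simpa [Function.comp_def] using
    (hasDerivAt_exp_smul_const' L _).scomp τ (hasDerivAt_id τ).ofReal_comp

theorem hasDerivAt_exp_sub_ofReal_smul (L : 𝔸) (t τ : ℝ) :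
    HasDerivAt (fun τ : ℝ => exp (((t : ℂ) - τ) • L)) (-(exp (((t : ℂ) - τ) • L) * L)) τ := by
  simpa [Function.comp_def] using
    (hasDerivAt_exp_smul_const L _).scomp τ ((hasDerivAt_id τ).ofReal_comp.const_sub _)

theorem hasDerivAt_exp_sub_smul_mul_mul_exp_smul_s16 (L α : 𝔸) (t τ : ℝ) :
    HasDerivAt (fun τ : ℝ => exp (((t : ℂ) - τ) • L) * α * exp ((τ : ℂ) • L))
      (-(exp (((t : ℂ) - τ) • L) * (L * α - α * L) * exp ((τ : ℂ) • L))) τ := by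
  refine (((hasDerivAt_exp_sub_ofReal_smul L t τ).mul_const α).mul
    (hasDerivAt_exp_ofReal_smul L τ)).congr_deriv ?_
  noncomm_ring

theorem norm_integral_cexp_smul_duhamel_le (Φ : 𝔸 →L[ℂ] E) (L α : 𝔸) {ν t : ℝ} (hν : ν ≠ 0)
    (ht : 0 ≤ t) :
    ‖∫ τ in 0..t, cexp (I * ν * τ) • Φ (exp (((t : ℂ) - τ) • L) * α * exp ((τ : ℂ) • L))‖
      ≤ 1 / |ν| * (‖Φ (α * exp ((t : ℂ) • L))‖ + ‖Φ (exp ((t : ℂ) • L) * α)‖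
        + t * ⨆ τ ∈ Icc 0 t,
          ‖Φ (exp (((t : ℂ) - τ) • L) * (L * α - α * L) * exp ((τ : ℂ) • L))‖) := by
  have hcont : Continuous fun τ : ℝ =>
      Φ (exp (((t : ℂ) - τ) • L) * (L * α - α * L) * exp ((τ : ℂ) • L)) :=
    Φ.continuous.comp <| ((continuous_iff_continuousAt.2 fun τ =>
      (hasDerivAt_exp_sub_ofReal_smul L t τ).continuousAt).mul continuous_const).mul
      (continuous_iff_continuousAt.2 fun τ => (hasDerivAt_exp_ofReal_smul L τ).continuousAt)
  have hbound := norm_integral_cexp_I_mul_smul_le hν ht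
    (fun τ _ => (Φ.restrictScalars ℝ).hasFDerivAt.comp_hasDerivAt τ
      (hasDerivAt_exp_sub_smul_mul_mul_exp_smul_s16 L α t τ) |>.congr_deriv (map_neg Φ _))
    (hcont.neg.intervalIntegrable _ _)
    (fun τ hτ => (norm_neg _).le.trans <|
      isCompact_Icc.le_biSup_of_continuousOn hcont.norm.continuousOn hτ)
  simpa using hbound

end Oscillatory

noncomputable def Matrix.mulVecCLM {𝕜 : Type*} [NontriviallyNormedField 𝕜] [CompleteSpace 𝕜]
    {m n : Type*} [Fintype m] [Fintype n] (v : n → 𝕜) : Matrix m n 𝕜 →L[𝕜] (m → 𝕜) :=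
  LinearMap.toContinuousLinearMap
    { toFun := fun M => M *ᵥ v
      map_add' := fun M N => add_mulVec M N v
      map_smul' := fun c M => smul_mulVec c M v }

/-- The `d = 1` nonresonant decay estimate: one integration by parts bounds the
oscillatory Duhamel integral by `O(ω⁻¹)`. -/
theorem oscillatory_integral_one_dim_matrix_bound
    (n : ℕ) (L α : Matrix (Fin n) (Fin n) ℂ) (ω : ℝ) (hω : 0 < ω)
    (m : ℤ) (hm : m ≠ 0) (t : ℝ) (ht : 0 < t) (u₀ : Fin n → ℂ) :
    ‖∫ τ in (0:ℝ)..t, Complex.exp (Complex.I * ω * m * τ) •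
        ((exp (((t : ℂ) - (τ : ℂ)) • L) * α * exp ((τ : ℂ) • L)).mulVec u₀)‖
      ≤ (1 / (ω * |(m : ℝ)|)) *
          (‖(α * exp ((t : ℂ) • L)).mulVec u₀‖
            + ‖(exp ((t : ℂ) • L) * α).mulVec u₀‖
            + t * ⨆ τ ∈ Set.Icc (0:ℝ) t,
                ‖(exp (((t : ℂ) - (τ : ℂ)) • L) * (L * α - α * L) *
                    exp ((τ : ℂ) • L)).mulVec u₀‖) := by
  have h := norm_integral_cexp_smul_duhamel_le (mulVecCLM u₀) L α
    (mul_ne_zero hω.ne' (Int.cast_ne_zero.2 hm)) ht.le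
  simp only [Complex.ofReal_mul, Complex.ofReal_intCast, ← mul_assoc, abs_mul, abs_of_pos hω] at h
  exact h
end
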